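/- If L1 and L2 are ladder graphs with n1 and n2 vertices respectively, n1 > n2 > 1, then 3^{n1-n2}·τ(L2) ≥ τ(L1) ≥ 2^{n1-n2}·τ(L2), where τ denotes the number of spanning trees. -/

import Mathlib

open SimpleGraph

/-- The triangular-lattice ladder on `n` vertices: listing the vertices of the two
parallel rails in zigzag order `0, 1, …, n-1`, two vertices are adjacent exactly when
they are at distance 1 or 2 in this order. -/
def ladder (n : ℕ) : SimpleGraph (Fin n) :=
  SimpleGraph.fromRel (fun i j => (j : ℕ) = (i : ℕ) + 1 ∨ (j : ℕ) = (i : ℕ) + 2)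

/-- The number of spanning trees of `G`. -/
noncomputable def numSpanningTrees {V : Type*} [Fintype V] (G : SimpleGraph V) : ℕ :=
  Set.ncard {T : SimpleGraph V | T ≤ G ∧ T.IsTree}

/-!
Let `L'` be a ladder with at least three vertices, `ℓ` its last vertex and `L` the ladder
obtained by deleting `ℓ`. The neighbours `a`, `b` of `ℓ` are adjacent in `L`. A spanning tree
of `L` extends to one of `L'` by attaching `ℓ` as a leaf to `a` or to `b`, which gives
`2 τ(L) ≤ τ(L')`. Conversely, a spanning tree `T` of `L'` is determined by its restriction to
`L` and by which of `a`, `b` are adjacent to `ℓ`. If `ℓ` is a leaf of `T`, the restriction is a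
spanning tree of `L`; if `ℓ` is adjacent to both, the restriction is a spanning forest with `a`
and `b` in different components, and adding the edge `ab` makes it a spanning tree of `L`.
Hence `τ(L') ≤ 3 τ(L)`, and the theorem follows by induction on the number of vertices.
-/

namespace SimpleGraph

section Connectivity

variable {V W : Type*} {G : SimpleGraph V} {H : SimpleGraph W} {f : V → W}

theorem Reachable.map_of_eq_or_adj
    (hf : ∀ ⦃u v⦄, G.Adj u v → f u = f v ∨ H.Adj (f u) (f v)) {u v : V}
    (h : G.Reachable u v) : H.Reachable (f u) (f v) := by
  obtain ⟨p⟩ := h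
  induction p with
  | nil => rfl
  | cons huv _ ih =>
    rcases hf huv with heq | hadj
    · exact heq ▸ ih
    · exact hadj.reachable.trans ih

theorem Connected.of_surjective_of_eq_or_adj (hG : G.Connected) (hsurj : Function.Surjective f)
    (hf : ∀ ⦃u v⦄, G.Adj u v → f u = f v ∨ H.Adj (f u) (f v)) : H.Connected := by
  have : Nonempty W := hG.nonempty.map f
  refine (connected_iff H).mpr ⟨fun x y => ?_, this⟩
  obtain ⟨u, rfl⟩ := hsurj x
  obtain ⟨v, rfl⟩ := hsurj y
  exact (hG u v).map_of_eq_or_adj hf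

end Connectivity

section LastVertex

variable {n : ℕ}

def attachLeaf (T : SimpleGraph (Fin n)) (c : Fin n) : SimpleGraph (Fin (n + 1)) :=
  T.map Fin.castSuccEmb ⊔ edge c.castSucc (Fin.last n)

variable {T : SimpleGraph (Fin n)} {c : Fin n}

theorem attachLeaf_adj_last_iff {x : Fin (n + 1)} :
    (T.attachLeaf c).Adj x (Fin.last n) ↔ x = c.castSucc := by
  rw [attachLeaf, sup_adj, map_adj]
  simp +contextual [edge_adj, Fin.castSucc_ne_last, (Fin.castSucc_ne_last _).symm]

@[simp]
theorem comap_castSucc_attachLeaf : (T.attachLeaf c).comap Fin.castSucc = T := by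
  ext u v
  rw [comap_adj, attachLeaf, sup_adj, map_adj]
  simp [edge_adj, Fin.castSucc_ne_last]

theorem IsTree.attachLeaf (hT : T.IsTree) (c : Fin n) : (T.attachLeaf c).IsTree := by
  have hleaf : (T.attachLeaf c).Adj c.castSucc (Fin.last n) := attachLeaf_adj_last_iff.mpr rfl
  have hreach : ∀ x, (T.attachLeaf c).Reachable x (Fin.last n) := by
    refine Fin.lastCases (Reachable.refl _) fun x => ?_
    let hom : T →g T.attachLeaf c :=
      (Hom.ofLE le_sup_left).comp (Embedding.map Fin.castSuccEmb T).toHom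
    exact ((hT.connected x c).map hom).trans hleaf.reachable
  have hconn : (T.attachLeaf c).Connected :=
    (connected_iff _).mpr ⟨fun x y => (hreach x).trans (hreach y).symm, ⟨Fin.last n⟩⟩
  have hnew : s(c.castSucc, Fin.last n) ∉ (T.map Fin.castSuccEmb).edgeSet := by
    rw [mem_edgeSet, map_adj]
    rintro ⟨_, v, -, -, hv⟩
    exact Fin.castSucc_ne_last v hv
  rw [isTree_iff_connected_and_card] at hT ⊢
  refine ⟨hconn, ?_⟩
  rw [SimpleGraph.attachLeaf, edgeSet_sup, edgeSet_edge_of_ne (Fin.castSucc_ne_last c),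
    Set.union_singleton, Nat.card_coe_set_eq, Set.ncard_insert_of_notMem hnew,
    ← Nat.card_coe_set_eq, edgeSet_map,
    Nat.card_image_of_injective Fin.castSuccEmb.sym2Map.injective, hT.2, Nat.card_fin,
    Nat.card_fin]

theorem eq_of_comap_castSucc_eq {G H : SimpleGraph (Fin (n + 1))}
    (hcomap : G.comap Fin.castSucc = H.comap Fin.castSucc)
    (hlast : ∀ x : Fin n, G.Adj x.castSucc (Fin.last n) ↔ H.Adj x.castSucc (Fin.last n)) :
    G = H := by
  ext u v
  induction u using Fin.lastCases with
  | last =>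
    induction v using Fin.lastCases with
    | last => simp
    | cast v => rw [adj_comm, hlast, adj_comm]
  | cast u =>
    induction v using Fin.lastCases with
    | last => exact hlast u
    | cast v => exact Iff.of_eq congr(($hcomap).Adj u v)

theorem Connected.of_comap_castSucc_le {G : SimpleGraph (Fin (n + 1))} {K : SimpleGraph (Fin n)}
    (hG : G.Connected) (hK : G.comap Fin.castSucc ≤ K) (c : Fin n)
    (hc : ∀ x, G.Adj x.castSucc (Fin.last n) → x = c ∨ K.Adj x c) : K.Connected := by
  refine hG.of_surjective_of_eq_or_adj (f := Fin.lastCases c id)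
    (fun x => ⟨x.castSucc, Fin.lastCases_castSucc _⟩) fun u v huv => ?_
  induction u using Fin.lastCases with
  | last =>
    induction v using Fin.lastCases with
    | last => exact (huv.ne rfl).elim
    | cast v =>
      simp only [Fin.lastCases_last, Fin.lastCases_castSucc, id]
      rcases hc v huv.symm with rfl | h
      · exact Or.inl rfl
      · exact Or.inr h.symm
  | cast u =>
    induction v using Fin.lastCases with
    | last =>
      simp only [Fin.lastCases_last, Fin.lastCases_castSucc, id]
      rcases hc u huv with rfl | h
      · exact Or.inl rfl
      · exact Or.inr h
    | cast v =>
      simp only [Fin.lastCases_castSucc, id]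
      exact Or.inr (hK huv)

theorem IsTree.comap_castSucc_of_adj_last_imp {G : SimpleGraph (Fin (n + 1))} (hG : G.IsTree)
    {c : Fin n} (hc : ∀ x, G.Adj x.castSucc (Fin.last n) → x = c) :
    (G.comap Fin.castSucc).IsTree :=
  ⟨hG.connected.of_comap_castSucc_le le_rfl c fun x hx => Or.inl (hc x hx),
    hG.isAcyclic.of_comap Fin.castSuccEmb⟩

theorem IsAcyclic.not_reachable_comap_castSucc {G : SimpleGraph (Fin (n + 1))} (hG : G.IsAcyclic)
    {a b : Fin n} (hab : a ≠ b) (ha : G.Adj a.castSucc (Fin.last n))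
    (hb : G.Adj b.castSucc (Fin.last n)) : ¬ (G.comap Fin.castSucc).Reachable a b := by
  classical
  -- A path from `a` to `b` avoiding the last vertex would close a cycle through it.
  rintro ⟨p⟩
  let φ : G.comap Fin.castSucc →g G := ⟨Fin.castSucc, id⟩
  have hq : (p.toPath.1.map φ).IsPath := p.toPath.2.map (Fin.castSucc_injective n)
  have hlast : Fin.last n ∉ (p.toPath.1.map φ).support := by
    rw [Walk.support_map, List.mem_map]
    rintro ⟨x, -, hx⟩
    exact Fin.castSucc_ne_last x hx
  have : b.castSucc ∈ [a.castSucc, Fin.last n] :=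
    hG.mem_support_of_ne_mem_support_of_adj_of_isPath (Walk.IsPath.of_adj ha) hq hb.symm hlast
  simp [Fin.castSucc_ne_last, hab.symm] at this

theorem IsTree.comap_castSucc_sup_edge {G : SimpleGraph (Fin (n + 1))} (hG : G.IsTree)
    {a b : Fin n} (hab : a ≠ b) (ha : G.Adj a.castSucc (Fin.last n))
    (hb : G.Adj b.castSucc (Fin.last n))
    (hc : ∀ x, G.Adj x.castSucc (Fin.last n) → x = a ∨ x = b) :
    (G.comap Fin.castSucc ⊔ edge a b).IsTree := by
  refine ⟨hG.connected.of_comap_castSucc_le le_sup_left a fun x hx => ?_,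
    (hG.isAcyclic.of_comap Fin.castSuccEmb).sup_edge_of_not_reachable
      (hG.isAcyclic.not_reachable_comap_castSucc hab ha hb)⟩
  rcases hc x hx with rfl | rfl
  · exact Or.inl rfl
  · exact Or.inr (Or.inr ((edge_adj _ _ _ _).mpr ⟨Or.inr ⟨rfl, rfl⟩, hab.symm⟩))

end LastVertex

section SpanningTrees

def spanningTrees {V : Type*} (G : SimpleGraph V) : Set (SimpleGraph V) :=
  {T | T ≤ G ∧ T.IsTree}

variable {n : ℕ} {G : SimpleGraph (Fin (n + 1))}

theorem Preconnected.exists_adj_castSucc_last [NeZero n] (hG : G.Preconnected) :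
    ∃ x : Fin n, G.Adj x.castSucc (Fin.last n) := by
  have : Nontrivial (Fin (n + 1)) := ⟨⟨(0 : Fin n).castSucc, _, Fin.castSucc_ne_last 0⟩⟩
  obtain ⟨y, hy⟩ := hG.exists_adj_of_nontrivial (Fin.last n)
  obtain ⟨x, rfl⟩ | rfl := y.eq_castSucc_or_eq_last
  · exact ⟨x, hy.symm⟩
  · exact (hy.ne rfl).elim

theorem two_mul_numSpanningTrees_comap_castSucc_le {a b : Fin n} (hab : a ≠ b)
    (ha : G.Adj a.castSucc (Fin.last n)) (hb : G.Adj b.castSucc (Fin.last n)) :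
    2 * numSpanningTrees (G.comap Fin.castSucc) ≤ numSpanningTrees G := by
  set S := spanningTrees (G.comap Fin.castSucc)
  have hmaps : ∀ c, G.Adj c.castSucc (Fin.last n) →
      (attachLeaf · c) '' S ⊆ spanningTrees G := by
    rintro c hc _ ⟨T, ⟨hle, hT⟩, rfl⟩
    exact ⟨sup_le ((map_le_iff_le_comap _ _ _).mpr hle) ((edge_le_iff _).mpr (Or.inr hc)),
      hT.attachLeaf c⟩
  have hinj : ∀ c, Set.InjOn (attachLeaf · c) S := fun c T₁ _ T₂ _ h => by
    simpa using congrArg (SimpleGraph.comap Fin.castSucc) h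
  have hdisj : Disjoint ((attachLeaf · a) '' S) ((attachLeaf · b) '' S) := by
    refine Set.disjoint_left.mpr ?_
    rintro _ ⟨T₁, -, rfl⟩ ⟨T₂, -, h : T₂.attachLeaf b = T₁.attachLeaf a⟩
    have : (T₂.attachLeaf b).Adj a.castSucc (Fin.last n) := by
      rw [h]
      exact attachLeaf_adj_last_iff.mpr rfl
    exact hab (Fin.castSucc_injective n (attachLeaf_adj_last_iff.mp this))
  calc 2 * S.ncard = ((attachLeaf · a) '' S).ncard + ((attachLeaf · b) '' S).ncard := by
        rw [(hinj a).ncard_image, (hinj b).ncard_image, two_mul]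
    _ = ((attachLeaf · a) '' S ∪ (attachLeaf · b) '' S).ncard :=
        (Set.ncard_union_eq hdisj).symm
    _ ≤ (spanningTrees G).ncard :=
        Set.ncard_le_ncard (Set.union_subset (hmaps a ha) (hmaps b hb))

def spanningTreesWithLastNeighbors (G : SimpleGraph (Fin (n + 1))) (P : Fin n → Prop) :
    Set (SimpleGraph (Fin (n + 1))) :=
  {T ∈ spanningTrees G | ∀ x, T.Adj x.castSucc (Fin.last n) ↔ P x}

theorem ncard_spanningTreesWithLastNeighbors_eq_le (c : Fin n) :
    (G.spanningTreesWithLastNeighbors (· = c)).ncard ≤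
      numSpanningTrees (G.comap Fin.castSucc) := by
  refine Set.ncard_le_ncard_of_injOn (SimpleGraph.comap Fin.castSucc) ?_ ?_ (Set.toFinite _)
  · rintro T ⟨⟨hle, hT⟩, hc⟩
    exact ⟨fun u v h => hle h, hT.comap_castSucc_of_adj_last_imp fun x => (hc x).mp⟩
  · rintro T₁ ⟨-, h₁⟩ T₂ ⟨-, h₂⟩ h
    exact eq_of_comap_castSucc_eq h fun x => by rw [h₁, h₂]

theorem ncard_spanningTreesWithLastNeighbors_pair_le {a b : Fin n}
    (hab : (G.comap Fin.castSucc).Adj a b) :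
    (G.spanningTreesWithLastNeighbors (fun x => x = a ∨ x = b)).ncard ≤
      numSpanningTrees (G.comap Fin.castSucc) := by
  have hdel : ∀ T ∈ G.spanningTreesWithLastNeighbors (fun x => x = a ∨ x = b),
      (T.comap Fin.castSucc ⊔ edge a b) \ edge a b = T.comap Fin.castSucc := by
    rintro T ⟨⟨-, hT⟩, hc⟩
    refine Disjoint.sup_sdiff_cancel_right ((disjoint_edge _).mpr fun h => ?_)
    exact hT.isAcyclic.not_reachable_comap_castSucc hab.ne ((hc a).mpr (.inl rfl))
      ((hc b).mpr (.inr rfl)) h.reachable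
  refine Set.ncard_le_ncard_of_injOn (fun T => T.comap Fin.castSucc ⊔ edge a b) ?_ ?_
    (Set.toFinite _)
  · rintro T ⟨⟨hle, hT⟩, hc⟩
    exact ⟨sup_le (fun u v h => hle h) ((edge_le_iff _).mpr (Or.inr hab)),
      hT.comap_castSucc_sup_edge hab.ne ((hc a).mpr (.inl rfl)) ((hc b).mpr (.inr rfl))
        fun x => (hc x).mp⟩
  · intro T₁ h₁ T₂ h₂ h
    refine eq_of_comap_castSucc_eq ?_ fun x => by rw [h₁.2, h₂.2]
    rw [← hdel T₁ h₁, ← hdel T₂ h₂]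
    exact congrArg (· \ edge a b) h

theorem spanningTrees_subset_union_spanningTreesWithLastNeighbors {a b : Fin n}
    (hG : ∀ x, G.Adj x.castSucc (Fin.last n) → x = a ∨ x = b) :
    spanningTrees G ⊆ G.spanningTreesWithLastNeighbors (· = a) ∪
      G.spanningTreesWithLastNeighbors (· = b) ∪
      G.spanningTreesWithLastNeighbors (fun x => x = a ∨ x = b) := by
  have : NeZero n := ⟨a.pos.ne'⟩
  intro T hT
  have hnbr : ∀ x, T.Adj x.castSucc (Fin.last n) → x = a ∨ x = b := fun x hx => hG x (hT.1 hx)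
  by_cases ha : T.Adj a.castSucc (Fin.last n) <;> by_cases hb : T.Adj b.castSucc (Fin.last n)
  · refine .inr ⟨hT, fun x => ⟨hnbr x, ?_⟩⟩
    rintro (rfl | rfl) <;> assumption
  · refine .inl (.inl ⟨hT, fun x => ⟨fun hx => (hnbr x hx).resolve_right ?_, ?_⟩⟩)
    · rintro rfl; exact hb hx
    · rintro rfl; exact ha
  · refine .inl (.inr ⟨hT, fun x => ⟨fun hx => (hnbr x hx).resolve_left ?_, ?_⟩⟩)
    · rintro rfl; exact ha hx
    · rintro rfl; exact hb
  · obtain ⟨y, hy⟩ := hT.2.connected.preconnected.exists_adj_castSucc_last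
    rcases hnbr y hy with rfl | rfl
    · exact (ha hy).elim
    · exact (hb hy).elim

theorem numSpanningTrees_le_three_mul_comap_castSucc {a b : Fin n}
    (hab : (G.comap Fin.castSucc).Adj a b)
    (hG : ∀ x, G.Adj x.castSucc (Fin.last n) → x = a ∨ x = b) :
    numSpanningTrees G ≤ 3 * numSpanningTrees (G.comap Fin.castSucc) := by
  have hA := ncard_spanningTreesWithLastNeighbors_eq_le (G := G) a
  have hB := ncard_spanningTreesWithLastNeighbors_eq_le (G := G) b
  have hC := ncard_spanningTreesWithLastNeighbors_pair_le hab
  calc numSpanningTrees G ≤ _ :=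
        Set.ncard_le_ncard (spanningTrees_subset_union_spanningTreesWithLastNeighbors hG)
    _ ≤ _ := Set.ncard_union_le _ _
    _ ≤ _ := Nat.add_le_add_right (Set.ncard_union_le _ _) _
    _ ≤ _ := by omega

end SpanningTrees

end SimpleGraph

section Ladder

theorem comap_castSucc_ladder (n : ℕ) : (ladder (n + 1)).comap Fin.castSucc = ladder n := by
  ext u v
  simp [ladder]

theorem ladder_adj_castSucc_last_iff {m : ℕ} {x : Fin (m + 2)} :
    (ladder (m + 3)).Adj x.castSucc (Fin.last (m + 2)) ↔
      x = Fin.last (m + 1) ∨ x = (Fin.last m).castSucc := by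
  simp only [ladder, fromRel_adj, ne_eq, Fin.ext_iff, Fin.val_castSucc, Fin.val_last]
  omega

variable {n : ℕ}

theorem numSpanningTrees_ladder_succ_le (hn : 2 ≤ n) :
    numSpanningTrees (ladder (n + 1)) ≤ 3 * numSpanningTrees (ladder n) := by
  obtain ⟨m, rfl⟩ := Nat.exists_eq_add_of_le' hn
  rw [← comap_castSucc_ladder (m + 2)]
  refine numSpanningTrees_le_three_mul_comap_castSucc (a := Fin.last (m + 1))
    (b := (Fin.last m).castSucc) ?_ fun x => ladder_adj_castSucc_last_iff.mp
  rw [comap_castSucc_ladder]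
  simp [ladder, Fin.ext_iff]

theorem two_mul_numSpanningTrees_ladder_le_succ (hn : 2 ≤ n) :
    2 * numSpanningTrees (ladder n) ≤ numSpanningTrees (ladder (n + 1)) := by
  obtain ⟨m, rfl⟩ := Nat.exists_eq_add_of_le' hn
  rw [← comap_castSucc_ladder (m + 2)]
  exact two_mul_numSpanningTrees_comap_castSucc_le (Fin.castSucc_lt_last _).ne'
    (ladder_adj_castSucc_last_iff.mpr (.inl rfl)) (ladder_adj_castSucc_last_iff.mpr (.inr rfl))

variable {k : ℕ}

theorem numSpanningTrees_ladder_le_pow_mul (hk : 2 ≤ k) (hkn : k ≤ n) :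
    numSpanningTrees (ladder n) ≤ 3 ^ (n - k) * numSpanningTrees (ladder k) := by
  induction n, hkn using Nat.le_induction with
  | base => simp
  | succ n hkn ih =>
    calc numSpanningTrees (ladder (n + 1)) ≤ 3 * numSpanningTrees (ladder n) :=
          numSpanningTrees_ladder_succ_le (hk.trans hkn)
      _ ≤ 3 * (3 ^ (n - k) * numSpanningTrees (ladder k)) := by gcongr
      _ = 3 ^ (n + 1 - k) * numSpanningTrees (ladder k) := by
          rw [Nat.sub_add_comm hkn, pow_succ]; ring

theorem pow_mul_numSpanningTrees_ladder_le (hk : 2 ≤ k) (hkn : k ≤ n) :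
    2 ^ (n - k) * numSpanningTrees (ladder k) ≤ numSpanningTrees (ladder n) := by
  induction n, hkn using Nat.le_induction with
  | base => simp
  | succ n hkn ih =>
    calc 2 ^ (n + 1 - k) * numSpanningTrees (ladder k)
        = 2 * (2 ^ (n - k) * numSpanningTrees (ladder k)) := by
          rw [Nat.sub_add_comm hkn, pow_succ]; ring
      _ ≤ 2 * numSpanningTrees (ladder n) := by gcongr
      _ ≤ numSpanningTrees (ladder (n + 1)) :=
          two_mul_numSpanningTrees_ladder_le_succ (hk.trans hkn)

end Ladder

/-- If `L1` and `L2` are ladders with `n1` and `n2` vertices respectively,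
`n1 > n2 > 1`, then `3^(n1-n2)·τ(L2) ≥ τ(L1) ≥ 2^(n1-n2)·τ(L2)`. -/
theorem ladder_spanning_trees_bounds (n1 n2 : ℕ) (h21 : 1 < n2) (h12 : n2 < n1) :
    3 ^ (n1 - n2) * numSpanningTrees (ladder n2) ≥ numSpanningTrees (ladder n1) ∧
    numSpanningTrees (ladder n1) ≥ 2 ^ (n1 - n2) * numSpanningTrees (ladder n2) :=
  ⟨numSpanningTrees_ladder_le_pow_mul h21 h12.le, pow_mul_numSpanningTrees_ladder_le h21 h12.le⟩
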